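/- MUPSs of a string T cannot be nested: if T[i..j] and T[i'..j'] are two distinct MUPSs of T, then it is not the case that i ≤ i' and j' ≤ j. Consequently, sorting MUPSs by starting position also sorts them by ending position. -/

import Mathlib

/-- The substring T[i..j] of T (1-indexed, inclusive). -/
def sub (T : List Char) (i j : ℕ) : List Char := (T.drop (i-1)).take (j+1-i)

/-- A string is a palindrome if it equals its reversal. -/
def IsPal (w : List Char) : Prop := w.reverse = w

/-- p is a period of w: 0 < p ≤ |w| and w[k] = w[k+p] for all valid k (0-indexed). -/
def HasPeriod (w : List Char) (p : ℕ) : Prop :=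
  0 < p ∧ p ≤ w.length ∧ ∀ k, k + p < w.length → w[k]? = w[k + p]?

/-- u occurs in T at (1-indexed) position i. -/
def OccursAt (u T : List Char) (i : ℕ) : Prop :=
  1 ≤ i ∧ i + u.length - 1 ≤ T.length ∧ sub T i (i + u.length - 1) = u

/-- u is unique in T: nonempty and occurs at exactly one position. -/
def UniqueIn (u T : List Char) : Prop := u ≠ [] ∧ ∃! i, OccursAt u T i

/-- u occurs at least twice in T. -/
def OccursTwice (u T : List Char) : Prop := ∃ i j, i ≠ j ∧ OccursAt u T i ∧ OccursAt u T j

/-- T[i..j] is a (nonempty, in-bounds) palindromic substring of T. -/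
def IsPalSub (T : List Char) (i j : ℕ) : Prop :=
  1 ≤ i ∧ i ≤ j ∧ j ≤ T.length ∧ IsPal (sub T i j)

/-- T[i..j] is a shortest unique palindromic substring of T for the interval [p,q]. -/
def IsSUPS (T : List Char) (p q i j : ℕ) : Prop :=
  IsPalSub T i j ∧ UniqueIn (sub T i j) T ∧ i ≤ p ∧ q ≤ j ∧
  ∀ i' j', IsPalSub T i' j' → UniqueIn (sub T i' j') T → i' ≤ p → q ≤ j' →
    j + 1 - i ≤ j' + 1 - i'

/-- T[i..j] is a minimal unique palindromic substring of T. -/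
def IsMUPS (T : List Char) (i j : ℕ) : Prop :=
  IsPalSub T i j ∧ UniqueIn (sub T i j) T ∧ ¬ UniqueIn (sub T (i+1) (j-1)) T

/- ------------------ auxiliary development ------------------ -/

/-- 0-indexed occurrence. -/
def Occ (u T : List Char) (k : ℕ) : Prop := (T.drop k).take u.length = u

lemma Occ.bound {u T : List Char} {k : ℕ} (hu : u ≠ []) (h : Occ u T k) :
    k + u.length ≤ T.length := by
  have hc := congrArg List.length h
  rw [List.length_take, List.length_drop] at hc
  have h2 : u.length ≤ T.length - k := inf_eq_left.mp hc
  have h3 : 0 < u.length := List.length_pos_iff.2 hu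
  omega

lemma occursAt_iff {u T : List Char} {i : ℕ} (hu : u ≠ []) :
    OccursAt u T i ↔ 1 ≤ i ∧ Occ u T (i - 1) := by
  have hl : 0 < u.length := List.length_pos_iff.2 hu
  constructor
  · rintro ⟨h1, h2, h3⟩
    refine ⟨h1, ?_⟩
    unfold Occ
    unfold sub at h3
    rwa [show i + u.length - 1 + 1 - i = u.length by omega] at h3
  · rintro ⟨h1, h2⟩
    have hb := h2.bound hu
    refine ⟨h1, by omega, ?_⟩
    unfold sub
    rw [show i + u.length - 1 + 1 - i = u.length by omega]
    exact h2

lemma sub_length {T : List Char} {i j : ℕ} (hi : 1 ≤ i) (hij : i ≤ j) (hj : j ≤ T.length) :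
    (sub T i j).length = j + 1 - i := by
  unfold sub
  rw [List.length_take, List.length_drop]
  omega

lemma occ_sub {T : List Char} {i j : ℕ} (hi : 1 ≤ i) (hij : i ≤ j) (hj : j ≤ T.length) :
    Occ (sub T i j) T (i - 1) := by
  unfold Occ
  rw [sub_length hi hij hj]
  rfl

/-- A factor of an occurring word occurs, at the shifted position. -/
lemma occ_factor {u v T : List Char} {k e : ℕ} (hocc : Occ u T k)
    (hv : v = (u.drop e).take v.length) (hle : e + v.length ≤ u.length) :
    Occ v T (k + e) := by
  unfold Occ
  have h1 : (T.drop (k + e)).take v.length = (u.drop e).take v.length := by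
    conv_rhs => rw [← hocc]
    rw [List.drop_take, List.take_take, inf_eq_left.mpr (by omega : v.length ≤ u.length - e),
      List.drop_drop]
  exact h1.trans hv.symm

/-- Nested subwords as factors. -/
lemma sub_nested {T : List Char} {i j i' j' : ℕ} (hi : 1 ≤ i) (hii : i ≤ i')
    (hij : i' ≤ j') (hjj : j' ≤ j) :
    sub T i' j' = ((sub T i j).drop (i' - i)).take (j' + 1 - i') := by
  unfold sub
  rw [List.drop_take, List.drop_drop, List.take_take,
    inf_eq_left.mpr (by omega : j' + 1 - i' ≤ j + 1 - i - (i' - i)),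
    show i - 1 + (i' - i) = i' - 1 by omega]

/-- Reversing a segment of a word. -/
lemma rev_seg (u : List Char) (d n : ℕ) (h : d + n ≤ u.length) :
    ((u.drop d).take n).reverse = (u.reverse.drop (u.length - d - n)).take n := by
  have h1 : (u.take (d + n)).drop d = (u.drop d).take n := by
    rw [List.drop_take]
    congr 1
    omega
  rw [← h1, List.reverse_drop, List.reverse_take, List.length_take,
    inf_eq_left.mpr (h : d + n ≤ u.length)]
  congr 1
  · omega
  · congr 1
    omega

lemma two_occ_not_unique {v T : List Char} {a b : ℕ} (ha : OccursAt v T a)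
    (hb : OccursAt v T b) (hab : a ≠ b) (h : UniqueIn v T) : False := by
  obtain ⟨p, _, hup⟩ := h.2
  exact hab ((hup a ha).trans (hup b hb).symm)

lemma key (T : List Char) (i j i' j' : ℕ)
    (h1 : IsMUPS T i j) (h2 : IsMUPS T i' j')
    (hne : (i, j) ≠ (i', j')) (hii : i ≤ i') (hjj : j' ≤ j) : False := by
  obtain ⟨⟨hi1, hij, hjT, hpalu⟩, huni_u, hnin⟩ := h1
  obtain ⟨⟨hi1', hij', hjT', hpalv⟩, huni_v, _⟩ := h2
  set v := sub T i' j' with hvdef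
  set u := sub T i j with hudef
  have hvlen : v.length = j' + 1 - i' := sub_length hi1' hij' hjT'
  have hulen : u.length = j + 1 - i := sub_length hi1 hij hjT
  have hvne : v ≠ [] := by
    intro h; rw [h] at hvlen; simp at hvlen; omega
  -- v as a factor of u
  have hv_in_u : v = (u.drop (i' - i)).take v.length := by
    rw [hvlen]; exact sub_nested hi1 hii hij' hjj
  -- mirror occurrence of v inside u
  have hv_mirror : v = (u.drop (j - j')).take v.length := by
    have := rev_seg u (i' - i) v.length (by omega)
    rw [← hv_in_u] at this
    rw [hpalv, hpalu] at this
    rw [show u.length - (i' - i) - v.length = j - j' by omega] at this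
    exact this
  have occ_u : Occ u T (i - 1) := occ_sub hi1 hij hjT
  have occ2 : Occ v T ((i - 1) + (j - j')) :=
    occ_factor occ_u hv_mirror (by omega)
  by_cases hc : i' = i + (j - j')
  · -- concentric case: v lies in the inner substring, which is not unique
    have hii0 : i < i' := by
      rcases Nat.lt_or_ge i i' with h | h
      · exact h
      · exfalso
        apply hne
        have e1 : i = i' := le_antisymm hii h
        have e2 : j = j' := by omega
        rw [e1, e2]
    have hjj0 : j' < j := by omega
    set w := sub T (i+1) (j-1) with hwdef
    have hb1 : 1 ≤ i + 1 := by omega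
    have hb2 : i + 1 ≤ j - 1 := by omega
    have hb3 : j - 1 ≤ T.length := by omega
    have hwlen : w.length = j - 1 + 1 - (i + 1) := sub_length hb1 hb2 hb3
    have hwne : w ≠ [] := by
      intro h; rw [h] at hwlen; simp at hwlen; omega
    have occ_w1 : OccursAt w T (i + 1) := by
      rw [occursAt_iff hwne]
      exact ⟨by omega, by simpa using occ_sub hb1 hb2 hb3⟩
    -- get a second occurrence of w
    have hnu : ¬ ∃! p, OccursAt w T p := fun h => hnin ⟨hwne, h⟩
    have hq2 : ∃ q, OccursAt w T q ∧ q ≠ i + 1 := by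
      by_contra hcon
      push_neg at hcon
      exact hnu ⟨i + 1, occ_w1, fun y hy => hcon y hy⟩
    obtain ⟨q, hq, hqne⟩ := hq2
    have hq1 : 1 ≤ q := hq.1
    have occq : Occ w T (q - 1) := ((occursAt_iff hwne).1 hq).2
    -- v inside w
    have hv_in_w : v = (w.drop (i' - (i+1))).take v.length := by
      rw [hvlen]; exact sub_nested hb1 (by omega) hij' (by omega)
    have occv1 : Occ v T ((i + 1 - 1) + (i' - (i+1))) := by
      refine occ_factor ?_ hv_in_w (by omega)
      simpa using occ_sub hb1 hb2 hb3
    have occv2 : Occ v T ((q - 1) + (i' - (i+1))) :=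
      occ_factor occq hv_in_w (by omega)
    -- two distinct 1-indexed occurrences
    have o1 : OccursAt v T (i' ) := by
      rw [occursAt_iff hvne]
      refine ⟨by omega, ?_⟩
      rwa [show (i + 1 - 1) + (i' - (i+1)) = i' - 1 by omega] at occv1
    have o2 : OccursAt v T (q + (i' - (i+1))) := by
      rw [occursAt_iff hvne]
      refine ⟨by omega, ?_⟩
      rwa [show (q - 1) + (i' - (i+1)) = q + (i' - (i+1)) - 1 by omega] at occv2
    exact two_occ_not_unique o1 o2 (by omega) huni_v
  · -- non-concentric: mirror gives a second occurrence of v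
    have o1 : OccursAt v T i' := by
      rw [occursAt_iff hvne]
      exact ⟨by omega, occ_sub hi1' hij' hjT'⟩
    have o2 : OccursAt v T (i + (j - j')) := by
      rw [occursAt_iff hvne]
      refine ⟨by omega, ?_⟩
      rwa [show (i - 1) + (j - j') = i + (j - j') - 1 by omega] at occ2
    exact two_occ_not_unique o1 o2 hc huni_v

/-- MUPSs cannot be nested; hence sorting by start position also sorts by end. -/
theorem mups_not_nested (T : List Char) (i j i' j' : ℕ)
    (h1 : IsMUPS T i j) (h2 : IsMUPS T i' j') (hne : (i, j) ≠ (i', j')) :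
    ¬ (i ≤ i' ∧ j' ≤ j) ∧ (i < i' → j < j') := by
  constructor
  · rintro ⟨h, h'⟩
    exact key T i j i' j' h1 h2 hne h h'
  · intro hlt
    by_contra hj
    push_neg at hj
    exact key T i j i' j' h1 h2
      (by simp only [ne_eq, Prod.mk.injEq, not_and]; intro h; omega) hlt.le hj
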